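/- arXiv:1911.09072 — 4 statements merged into one kernel-verified Lean document; each statement's English description precedes it below -/
import Mathlib

section
/- Let A be an n×p matrix with entries in ℕ, n ≥ 2, whose rank is strictly less than n. Then, after a suitable permutation of the rows (coordinates of ℕ^n), there is a positive integer d such that, if A' denotes the (n−1)×p matrix consisting of the first n−1 rows of dA, then the toric ideals of A and A' coincide: I_{A'} = I_A as ideals of k[x_1,…,x_p]; in particular the semigroup rings k[A'] and k[A] are isomorphic as k-algebras. -/
/-! A rational relation `∑ i, c i • (row i of A) = 0` with `c i₀ ≠ 0` shows that the `i₀`-th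
coordinate of an exponent `A u` is determined by the other coordinates. The toric map sends
`x^u` to `t^(A u)`, so it is `mapDomain` along `u ↦ A u`; deleting row `i₀` composes this with a
coordinate projection that is injective on the image of `u ↦ A u`, which leaves the kernel
unchanged. Hence `d = 1` already works. -/

open MvPolynomial

/-- The toric ideal `I_A ⊆ k[x_j : j ∈ σ]` of a family `A` of vectors in `ℕ^n`:
the kernel of the `k`-algebra map sending `x_j` to `t^{a_j} = ∏ i, t_i^{(a_j)_i}`. -/
noncomputable def toricIdeal (k : Type) [Field k] {σ : Type} {n : ℕ} (A : σ → Fin n → ℕ) :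
    Ideal (MvPolynomial σ k) :=
  RingHom.ker (aeval (R := k) fun j => ∏ i, (X i : MvPolynomial (Fin n) k) ^ A j i)

open Matrix

theorem Finsupp.mapDomain_comp_eq_zero_iff {α β γ M : Type*} [AddCommMonoid M]
    {f : α → β} {g : β → γ} (hg : Set.InjOn g (Set.range f)) (v : α →₀ M) :
    mapDomain (g ∘ f) v = 0 ↔ mapDomain f v = 0 := by
  classical
  refine ⟨fun h => Finsupp.mapDomain_injOn _ hg ?_ (by simp) ?_, fun h => by
    rw [mapDomain_comp, h, mapDomain_zero]⟩
  · exact (Finset.coe_subset.2 mapDomain_support).trans (by simp)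
  · rw [← mapDomain_comp, h, mapDomain_zero]

theorem Matrix.exists_ne_zero_vecMul_eq_zero_of_rank_lt {m n K : Type*} [Fintype m]
    [Fintype n] [Field K] {M : Matrix m n K} (h : M.rank < Fintype.card m) :
    ∃ c ≠ 0, c ᵥ* M = 0 := by
  have hdep : ¬ LinearIndependent K M.row := fun hli => h.ne hli.rank_matrix
  obtain ⟨c, hc, i, hi⟩ := Fintype.not_linearIndependent_iff.1 hdep
  refine ⟨c, fun h0 => hi (by simp [h0]), ?_⟩
  ext j
  simpa [vecMul, dotProduct, Finset.sum_apply, mul_comm] using congrFun hc j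

section Toric

variable {σ : Type} {n : ℕ}

noncomputable def toricExponent (A : σ → Fin n → ℕ) : (σ →₀ ℕ) →+ (Fin n →₀ ℕ) :=
  (Finsupp.linearCombination ℕ fun j => Finsupp.equivFunOnFinite.symm (A j)).toAddMonoidHom

theorem toricExponent_apply (A : σ → Fin n → ℕ) (u : σ →₀ ℕ) (i : Fin n) :
    toricExponent A u i = u.sum fun j a => a * A j i := by
  simp [toricExponent, Finsupp.linearCombination_apply, Finsupp.sum_apply]

theorem toricExponent_single (A : σ → Fin n → ℕ) (j : σ) :
    toricExponent A (Finsupp.single j 1) = Finsupp.equivFunOnFinite.symm (A j) := by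
  simp [toricExponent]

theorem aeval_toric_eq_mapDomainAlgHom (k : Type) [Field k] (A : σ → Fin n → ℕ) :
    (aeval fun j => ∏ i, (X i : MvPolynomial (Fin n) k) ^ A j i) =
      AddMonoidAlgebra.mapDomainAlgHom k k (toricExponent A) := by
  refine MvPolynomial.algHom_ext fun j => ?_
  rw [aeval_X, X, AddMonoidAlgebra.mapDomainAlgHom_apply, ← single_eq_monomial, AddMonoidAlgebra.mapDomain_single, toricExponent_single,
    single_eq_monomial, monomial_eq, C_1, one_mul, Finsupp.prod_fintype _ _ (by simp)]
  rfl

theorem mem_toricIdeal_iff (k : Type) [Field k] (A : σ → Fin n → ℕ) (f : MvPolynomial σ k) :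
    f ∈ toricIdeal k A ↔
      Finsupp.mapDomain (toricExponent A) (AddMonoidAlgebra.coeff f) = 0 := by
  rw [toricIdeal, RingHom.mem_ker, aeval_toric_eq_mapDomainAlgHom,
    AddMonoidAlgebra.mapDomainAlgHom_apply, AddMonoidAlgebra.mapDomain,
    AddMonoidAlgebra.ofCoeff_eq_zero]

theorem toricIdeal_comp_eq (k : Type) [Field k] {m : ℕ} (A : σ → Fin n → ℕ)
    (r : Fin m → Fin n)
    (hr : ∀ u v, (∀ i, toricExponent A u (r i) = toricExponent A v (r i)) →
      toricExponent A u = toricExponent A v) :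
    toricIdeal k (fun j => A j ∘ r) = toricIdeal k A := by
  set restrict : (Fin n →₀ ℕ) → (Fin m →₀ ℕ) := fun a => Finsupp.equivFunOnFinite.symm (a ∘ r)
  have hcomp : ⇑(toricExponent fun j => A j ∘ r) = restrict ∘ toricExponent A := by
    ext u i
    simp [restrict, toricExponent_apply]
  have hinj : Set.InjOn restrict (Set.range (toricExponent A)) := by
    rintro _ ⟨u, rfl⟩ _ ⟨v, rfl⟩ huv
    exact hr u v fun i => DFunLike.congr_fun huv i
  ext f
  rw [mem_toricIdeal_iff, mem_toricIdeal_iff, hcomp, Finsupp.mapDomain_comp_eq_zero_iff hinj]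

theorem toricExponent_eq_of_forall_ne {A : σ → Fin n → ℕ} {c : Fin n → ℚ}
    (hc : ∀ j, ∑ i, c i * A j i = 0) {i₀ : Fin n} (hi₀ : c i₀ ≠ 0) {u v : σ →₀ ℕ}
    (huv : ∀ i ≠ i₀, toricExponent A u i = toricExponent A v i) :
    toricExponent A u = toricExponent A v := by
  have hrel : ∀ w : σ →₀ ℕ, ∑ i, c i * (toricExponent A w i : ℚ) = 0 := by
    intro w
    simp only [toricExponent_apply, Finsupp.sum, Nat.cast_sum, Nat.cast_mul, Finset.mul_sum]
    rw [Finset.sum_comm]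
    refine Finset.sum_eq_zero fun j _ => ?_
    simp only [mul_left_comm (c _), ← Finset.mul_sum, hc, mul_zero]
  have hdiff : c i₀ * ((toricExponent A u i₀ : ℚ) - toricExponent A v i₀) = 0 := by
    rw [← sub_eq_zero.2 ((hrel u).trans (hrel v).symm), ← Finset.sum_sub_distrib,
      Finset.sum_eq_single i₀ (fun i _ hi => by rw [huv i hi, sub_self]) (by simp), mul_sub]
  ext i
  obtain rfl | hi := eq_or_ne i i₀
  · exact_mod_cast sub_eq_zero.1 ((mul_eq_zero.1 hdiff).resolve_left hi₀)
  · exact huv i hi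

end Toric

theorem Fin.exists_swap_castLE_sub_one_eq {n : ℕ} (i₀ i : Fin n) (hi : i ≠ i₀) :
    ∃ i' : Fin (n - 1), Equiv.swap i₀ ⟨n - 1, Nat.sub_one_lt_of_lt i₀.isLt⟩
      (Fin.castLE (Nat.sub_le n 1) i') = i := by
  set last : Fin n := ⟨n - 1, Nat.sub_one_lt_of_lt i₀.isLt⟩
  have hne : Equiv.swap i₀ last i ≠ last := by
    rwa [Ne, Equiv.swap_apply_eq_iff, Equiv.swap_apply_right]
  replace hne : (Equiv.swap i₀ last i : ℕ) ≠ n - 1 := fun h => hne (Fin.ext h)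
  exact ⟨⟨Equiv.swap i₀ last i, by have := (Equiv.swap i₀ last i).isLt; omega⟩,
    Equiv.swap_apply_self i₀ last i⟩

theorem degenerate_drop_row_general (k : Type) [Field k] {n p : ℕ}
    (A : Fin p → Fin n → ℕ)
    (hrk : Matrix.rank (Matrix.of fun (i : Fin n) (j : Fin p) => (A j i : ℚ)) < n) :
    ∃ (e : Equiv.Perm (Fin n)) (d : ℕ), 0 < d ∧
      toricIdeal k (fun j (i : Fin (n - 1)) => d * A j (e (Fin.castLE (Nat.sub_le n 1) i))) =
        toricIdeal k A ∧
      Nonempty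
        ((MvPolynomial (Fin p) k ⧸
            toricIdeal k (fun j (i : Fin (n - 1)) => d * A j (e (Fin.castLE (Nat.sub_le n 1) i))))
          ≃ₐ[k] (MvPolynomial (Fin p) k ⧸ toricIdeal k A)) := by
  obtain ⟨c, hc0, hc⟩ := exists_ne_zero_vecMul_eq_zero_of_rank_lt
    (M := of fun i j => (A j i : ℚ)) (by simpa using hrk)
  obtain ⟨i₀, hi₀⟩ := Function.ne_iff.1 hc0
  have hrel : ∀ j, ∑ i, c i * A j i = 0 := fun j => by
    simpa [vecMul, dotProduct] using congrFun hc j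
  have hI : toricIdeal k (fun j (i : Fin (n - 1)) => 1 * A j
      (Equiv.swap i₀ ⟨n - 1, Nat.sub_one_lt_of_lt i₀.isLt⟩ (Fin.castLE (Nat.sub_le n 1) i))) =
      toricIdeal k A := by
    simp only [one_mul]
    refine toricIdeal_comp_eq k A _ fun u v huv => ?_
    refine toricExponent_eq_of_forall_ne hrel hi₀ fun i hi => ?_
    obtain ⟨i', rfl⟩ := Fin.exists_swap_castLE_sub_one_eq i₀ i hi
    exact huv i'
  exact ⟨_, 1, one_pos, hI, ⟨Ideal.quotientEquivAlgOfEq k hI⟩⟩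

/-- If the `n×p` matrix of columns `a₁,…,a_p` has rank `< n` (with `n ≥ 2`), then after a
permutation of the rows there is a positive integer `d` such that the matrix `A'` of the
first `n−1` rows of `dA` has the same toric ideal as `A`; in particular `k[A'] ≅ k[A]`. -/
theorem degenerate_drop_row (k : Type) [Field k] {n p : ℕ} (hn : 2 ≤ n)
    (A : Fin p → Fin n → ℕ)
    (hrk : Matrix.rank (Matrix.of fun (i : Fin n) (j : Fin p) => (A j i : ℚ)) < n) :
    ∃ (e : Equiv.Perm (Fin n)) (d : ℕ), 0 < d ∧
      toricIdeal k (fun j (i : Fin (n - 1)) => d * A j (e (Fin.castLE (Nat.sub_le n 1) i))) =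
        toricIdeal k A ∧
      Nonempty
        ((MvPolynomial (Fin p) k ⧸
            toricIdeal k (fun j (i : Fin (n - 1)) => d * A j (e (Fin.castLE (Nat.sub_le n 1) i))))
          ≃ₐ[k] (MvPolynomial (Fin p) k ⧸ toricIdeal k A)) :=
  degenerate_drop_row_general k A hrk
end

section
/- Let A = (a_1,…,a_p) be a finite list of vectors in ℕ^n, b ∈ ℕ^n nonzero, and k_1, k_2 positive integers with gcd(k_1,k_2) = 1 and gcd(k_1, gcd(b_1,…,b_n)) = 1. Let C = k_1A ∪ {k_2b} with variable y corresponding to k_2b. Then every binomial of the form w = y^{γ}·∏_j x_j^{α_j} − ∏_j x_j^{β_j} (γ ≥ 0, α, β ∈ ℕ^p) lying in the toric ideal I_C has γ divisible by k_1. -/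
/-!
A binomial `x^u - x^v` lies in a toric ideal exactly when `∑ u_j a_j = ∑ v_j a_j`. For `C` this
reads `k₁ ∑ α_j a_j + γ k₂ b = k₁ ∑ β_j a_j`, so `k₁ ∣ γ k₂ b_i` for every `i`; coprimality with
`k₂` and then with `gcd(b₁,…,b_n)` leaves `k₁ ∣ γ`.
-/

open MvPolynomial

namespace MvPolynomial

variable {R τ : Type*} [CommSemiring R] [Fintype τ]

theorem monomial_equivFunOnFinite_symm_one (u : τ → ℕ) :
    monomial (Finsupp.equivFunOnFinite.symm u) (1 : R) = ∏ i, X i ^ u i := by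
  rw [monomial_eq, C_1, one_mul, Finsupp.prod_fintype _ _ fun _ => pow_zero _]
  rfl

theorem prod_X_pow_injective [Nontrivial R] :
    Function.Injective fun u : τ → ℕ => ∏ i, (X i : MvPolynomial τ R) ^ u i := by
  intro u v h
  simp only [← monomial_equivFunOnFinite_symm_one] at h
  exact Finsupp.equivFunOnFinite.symm.injective (monomial_left_injective one_ne_zero h)

theorem aeval_prod_X_pow_prod_X_pow {σ : Type*} [Fintype σ] (A : σ → τ → ℕ) (e : σ → ℕ) :
    aeval (fun j => ∏ i, (X i : MvPolynomial τ R) ^ A j i) (∏ j, X j ^ e j : MvPolynomial σ R) =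
      ∏ i, X i ^ (∑ j, e j • A j) i := by
  simp only [map_prod, map_pow, aeval_X, ← Finset.prod_pow, ← pow_mul]
  rw [Finset.prod_comm]
  simp [Finset.prod_pow_eq_pow_sum, mul_comm]

end MvPolynomial

theorem prod_X_pow_sub_mem_toricIdeal_iff {k : Type} [Field k] {σ : Type} [Fintype σ] {n : ℕ}
    (A : σ → Fin n → ℕ) (u v : σ → ℕ) :
    (∏ j, X j ^ u j - ∏ j, X j ^ v j : MvPolynomial σ k) ∈ toricIdeal k A ↔
      ∑ j, u j • A j = ∑ j, v j • A j := by
  rw [toricIdeal, RingHom.mem_ker, map_sub, sub_eq_zero, aeval_prod_X_pow_prod_X_pow,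
    aeval_prod_X_pow_prod_X_pow, prod_X_pow_injective.eq_iff]

theorem Nat.Coprime.dvd_of_forall_dvd_mul {ι : Type*} {s : Finset ι} {b : ι → ℕ} {m c : ℕ}
    (hm : Nat.Coprime m (s.gcd b)) (h : ∀ i ∈ s, m ∣ c * b i) : m ∣ c := by
  refine hm.dvd_of_dvd_mul_right ?_
  rw [← normalize_eq c, ← Finset.gcd_mul_left]
  exact Finset.dvd_gcd h

theorem k1_dvd_y_exponent_general (k : Type) [Field k] {n p : ℕ}
    (A : Fin p → Fin n → ℕ) (b : Fin n → ℕ)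
    (k1 k2 : ℕ)
    (hcop : Nat.Coprime k1 k2) (hcopb : Nat.Coprime k1 (Finset.univ.gcd b))
    (γ : ℕ) (α β : Fin p → ℕ)
    (hw : (X (Sum.inr ()) ^ γ * ∏ j, X (Sum.inl j) ^ α j : MvPolynomial (Fin p ⊕ Unit) k) -
        (∏ j, X (Sum.inl j) ^ β j) ∈
      toricIdeal k (Sum.elim (fun j i => k1 * A j i) (fun _ : Unit => fun i => k2 * b i))) :
    k1 ∣ γ := by
  have hlhs : (X (Sum.inr ()) ^ γ * ∏ j, X (Sum.inl j) ^ α j : MvPolynomial (Fin p ⊕ Unit) k) =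
      ∏ j, X j ^ Sum.elim α (fun _ => γ) j := by
    simp [Fintype.prod_sum_type, mul_comm]
  have hrhs : (∏ j, X (Sum.inl j) ^ β j : MvPolynomial (Fin p ⊕ Unit) k) =
      ∏ j, X j ^ Sum.elim β (fun _ => 0) j := by
    simp [Fintype.prod_sum_type]
  rw [hlhs, hrhs, prod_X_pow_sub_mem_toricIdeal_iff] at hw
  simp only [Fintype.sum_sum_type, Sum.elim_inl, Sum.elim_inr, Finset.univ_unique,
    Finset.sum_singleton, zero_smul, add_zero] at hw
  refine hcopb.dvd_of_forall_dvd_mul fun i _ => hcop.dvd_of_dvd_mul_left ?_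
  have hi := congrFun hw i
  simp only [Pi.add_apply, Finset.sum_apply, Pi.smul_apply, smul_eq_mul] at hi
  have hk1 (c : Fin p → ℕ) : k1 ∣ ∑ j, c j * (k1 * A j i) :=
    Finset.dvd_sum fun j _ => dvd_mul_of_dvd_right (dvd_mul_right k1 _) _
  rw [mul_left_comm]
  exact (Nat.dvd_add_right (hk1 α)).mp (hi ▸ hk1 β)

/-- For `C = k₁A ∪ {k₂b}` with `gcd(k₁,k₂) = 1` and `gcd(k₁, gcd(b₁,…,b_n)) = 1`, any
binomial `y^γ ∏ x_j^{α_j} − ∏ x_j^{β_j}` in `I_C` has `γ` divisible by `k₁`. -/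
theorem k1_dvd_y_exponent (k : Type) [Field k] {n p : ℕ}
    (A : Fin p → Fin n → ℕ) (b : Fin n → ℕ) (hb : b ≠ 0)
    (k1 k2 : ℕ) (hk1 : 0 < k1) (hk2 : 0 < k2)
    (hcop : Nat.Coprime k1 k2) (hcopb : Nat.Coprime k1 (Finset.univ.gcd b))
    (γ : ℕ) (α β : Fin p → ℕ)
    (hw : (X (Sum.inr ()) ^ γ * ∏ j, X (Sum.inl j) ^ α j : MvPolynomial (Fin p ⊕ Unit) k) -
        (∏ j, X (Sum.inl j) ^ β j) ∈
      toricIdeal k (Sum.elim (fun j i => k1 * A j i) (fun _ : Unit => fun i => k2 * b i))) :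
    k1 ∣ γ :=
  k1_dvd_y_exponent_general k A b k1 k2 hcop hcopb γ α β hw
end

section
/- Let A = (a_1,…,a_p) ⊂ ℕ^n (also viewed as an n×p matrix) and b ∈ ℕ^n nonzero, and let k_1, k_2 be positive integers with gcd(k_1,k_2) = 1 and gcd(k_1, gcd(b_1,…,b_n)) = 1. Set C = k_1A ∪ {k_2b} and let r = s(A, k_2b) be the smallest positive integer s such that A·X = s·k_2·b has a solution X ∈ ℤ^p (assumed to exist). If w = y^{k_1 r'}·∏_{j∈J} x_j^{c_j} − ∏_{j∉J} x_j^{e_j} is a binomial in the toric ideal I_C whose two monomials have disjoint supports and r' > 0, then r divides r'. -/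
/-!
Comparing exponents, the binomial `w ∈ I_C` says `k₁ r' k₂ b + k₁ A c = k₁ A e`; cancelling `k₁`
gives `A (e - c) = r' k₂ b`, so `r'` lies in the subgroup of `ℤ` of those `s` for which
`A X = s k₂ b` is solvable over `ℤ`. The least positive element of a subgroup of `ℤ` divides
all its elements, since the remainder of an element modulo it is again in the subgroup.
-/

open MvPolynomial

namespace MvPolynomial

variable {R σ : Type*} [CommSemiring R] [Fintype σ]

theorem prod_univ_X_pow_eq_monomial (u : σ → ℕ) :
    ∏ i, (X i : MvPolynomial σ R) ^ u i = monomial (Finsupp.equivFunOnFinite.symm u) 1 := by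
  rw [monomial_eq, C_1, one_mul, Finsupp.prod_fintype _ _ fun _ => pow_zero _]
  rfl

theorem prod_univ_X_pow_injective [Nontrivial R] :
    Function.Injective fun u : σ → ℕ => ∏ i, (X i : MvPolynomial σ R) ^ u i := by
  intro u v h
  simp only [prod_univ_X_pow_eq_monomial] at h
  exact Finsupp.equivFunOnFinite.symm.injective (monomial_left_injective one_ne_zero h)

theorem aeval_prod_univ_X_pow {τ : Type*} [Fintype τ] (A : σ → τ → ℕ) (u : σ → ℕ) :
    aeval (fun j => ∏ i, (X i : MvPolynomial τ R) ^ A j i) (∏ j, X j ^ u j : MvPolynomial σ R) =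
      ∏ i, X i ^ ∑ j, u j * A j i := by
  simp only [map_prod, map_pow, aeval_X, ← Finset.prod_pow, ← pow_mul']
  rw [Finset.prod_comm]
  simp only [Finset.prod_pow_eq_pow_sum]

end MvPolynomial

theorem prod_X_pow_sub_prod_X_pow_mem_toricIdeal_iff {k : Type} [Field k] {σ : Type} [Fintype σ]
    {n : ℕ} (A : σ → Fin n → ℕ) (u v : σ → ℕ) :
    (∏ j, X j ^ u j - ∏ j, X j ^ v j : MvPolynomial σ k) ∈ toricIdeal k A ↔
      ∀ i, ∑ j, u j * A j i = ∑ j, v j * A j i := by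
  rw [toricIdeal, RingHom.mem_ker, map_sub, sub_eq_zero, aeval_prod_univ_X_pow,
    aeval_prod_univ_X_pow, prod_univ_X_pow_injective.eq_iff, funext_iff]

def solvableMultiples {ι κ : Type*} [Fintype ι] (M : ι → κ → ℤ) (v : κ → ℤ) : AddSubgroup ℤ where
  carrier := {s | ∃ x : ι → ℤ, ∀ i, ∑ j, x j * M j i = s * v i}
  zero_mem' := ⟨0, fun i => by simp⟩
  add_mem' := by
    rintro s t ⟨x, hx⟩ ⟨y, hy⟩
    exact ⟨x + y, fun i => by simp only [Pi.add_apply, add_mul, Finset.sum_add_distrib, hx, hy]⟩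
  neg_mem' := by
    rintro s ⟨x, hx⟩
    exact ⟨-x, fun i => by simp only [Pi.neg_apply, neg_mul, Finset.sum_neg_distrib, hx]⟩

theorem AddSubgroup.sInf_pos_dvd_of_natCast_mem (G : AddSubgroup ℤ) {m : ℕ} (hm : (m : ℤ) ∈ G) :
    sInf {s : ℕ | 0 < s ∧ (s : ℤ) ∈ G} ∣ m := by
  set S := {s : ℕ | 0 < s ∧ (s : ℤ) ∈ G}
  rcases Nat.eq_zero_or_pos m with rfl | hm_pos
  · exact dvd_zero _
  obtain ⟨hd_pos, hd⟩ : sInf S ∈ S := Nat.sInf_mem ⟨m, hm_pos, hm⟩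
  have hmod : ((m % sInf S : ℕ) : ℤ) ∈ G := by
    rw [Int.natCast_mod, Int.emod_def, mul_comm]
    exact G.sub_mem hm (G.zsmul_mem hd _)
  refine Nat.dvd_of_mod_eq_zero (Nat.eq_zero_of_not_pos fun hmod_pos => ?_)
  exact (Nat.mod_lt m hd_pos).not_ge (Nat.sInf_le ⟨hmod_pos, hmod⟩)

theorem level_divides_general (k : Type) [Field k] {n p : ℕ}
    (A : Fin p → Fin n → ℕ) (b : Fin n → ℕ)
    (k1 k2 : ℕ) (hk1 : 0 < k1)
    (r' : ℕ) (c e : Fin p → ℕ)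
    (hw : (X (Sum.inr ()) ^ (k1 * r') * ∏ j, X (Sum.inl j) ^ c j :
          MvPolynomial (Fin p ⊕ Unit) k) - (∏ j, X (Sum.inl j) ^ e j) ∈
      toricIdeal k (Sum.elim (fun j i => k1 * A j i) (fun _ : Unit => fun i => k2 * b i))) :
    sInf {s : ℕ | 0 < s ∧
        ∃ Xv : Fin p → ℤ, ∀ i, ∑ j, Xv j * (A j i : ℤ) = (s : ℤ) * (k2 * b i)} ∣ r' := by
  have hw' : (∏ j, X j ^ Sum.elim c (fun _ => k1 * r') j - ∏ j, X j ^ Sum.elim e 0 j :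
      MvPolynomial (Fin p ⊕ Unit) k) ∈
        toricIdeal k (Sum.elim (fun j i => k1 * A j i) (fun _ : Unit => fun i => k2 * b i)) := by
    simp only [Fintype.prod_sum_type, Sum.elim_inl, Sum.elim_inr, Pi.zero_apply, pow_zero,
      Finset.prod_const_one, mul_one, Finset.univ_unique, Finset.prod_singleton]
    rwa [mul_comm]
  have hexp := (prod_X_pow_sub_prod_X_pow_mem_toricIdeal_iff _ _ _).1 hw'
  refine AddSubgroup.sInf_pos_dvd_of_natCast_mem
    (solvableMultiples (fun j i => A j i) fun i => k2 * b i) ⟨fun j => e j - c j, fun i => ?_⟩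
  have hi : ∑ j, c j * A j i + r' * (k2 * b i) = ∑ j, e j * A j i := by
    have := hexp i
    simp only [Fintype.sum_sum_type, Sum.elim_inl, Sum.elim_inr, Pi.zero_apply, zero_mul,
      Finset.sum_const_zero, add_zero, Finset.univ_unique, Finset.sum_singleton,
      mul_left_comm _ k1, ← Finset.mul_sum] at this
    exact Nat.eq_of_mul_eq_mul_left hk1 (by linear_combination this)
  simp only [sub_mul, Finset.sum_sub_distrib, sub_eq_iff_eq_add']
  exact_mod_cast hi.symm

/-- Let `r = s(A,k₂b)` be the smallest `s > 0` such that `A·X = s·k₂·b` has an integer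
solution (assumed to exist). If `w = y^{k₁r'}·∏ x_j^{c_j} − ∏ x_j^{e_j}` is a binomial in
`I_C` (for `C = k₁A ∪ {k₂b}`) whose two monomials have disjoint supports, and `r' > 0`,
then `r` divides `r'`. -/
theorem level_divides (k : Type) [Field k] {n p : ℕ}
    (A : Fin p → Fin n → ℕ) (b : Fin n → ℕ) (hb : b ≠ 0)
    (k1 k2 : ℕ) (hk1 : 0 < k1) (hk2 : 0 < k2)
    (hcop : Nat.Coprime k1 k2) (hcopb : Nat.Coprime k1 (Finset.univ.gcd b))
    (hex : ∃ s : ℕ, 0 < s ∧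
      ∃ Xv : Fin p → ℤ, ∀ i, ∑ j, Xv j * (A j i : ℤ) = (s : ℤ) * (k2 * b i))
    (r' : ℕ) (hr' : 0 < r') (c e : Fin p → ℕ) (hdisj : ∀ j, c j = 0 ∨ e j = 0)
    (hw : (X (Sum.inr ()) ^ (k1 * r') * ∏ j, X (Sum.inl j) ^ c j :
          MvPolynomial (Fin p ⊕ Unit) k) - (∏ j, X (Sum.inl j) ^ e j) ∈
      toricIdeal k (Sum.elim (fun j i => k1 * A j i) (fun _ : Unit => fun i => k2 * b i))) :
    sInf {s : ℕ | 0 < s ∧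
        ∃ Xv : Fin p → ℤ, ∀ i, ∑ j, Xv j * (A j i : ℤ) = (s : ℤ) * (k2 * b i)} ∣ r' :=
  level_divides_general k A b k1 k2 hk1 r' c e hw
end

section
/- Let A = (a_1,…,a_p) ⊂ ℕ^n and let b ∈ ℕ^n be nonzero with gcd(b_1,…,b_n) = 1 and b ∈ ⟨A⟩, say b = Σ_{j=1}^p d_j a_j with d_j ∈ ℕ. Let u_1,…,u_q be positive integers with q ≥ 2 and set B = (u_1b,…,u_qb). Let k_1, k_2 be positive integers with gcd(k_1,k_2) = 1 and k_1 ∈ ⟨u_1,…,u_q⟩, say k_1 = Σ_{j=1}^q v_j u_j with v_j ∈ ℕ. Then for C = k_1A ∪ k_2B one has I_C = I_A + I_B + ⟨ρ⟩ where ρ = ∏_{j=1}^q y_j^{v_j} − ∏_{j=1}^p x_j^{d_j k_2}; in particular ⟨C⟩ is a gluing of ⟨A⟩ and ⟨B⟩. -/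
open MvPolynomial

/-!
Write the monomials of `k[x, y]` as `x^α y^β`. Since `I_C` is spanned by binomials, it suffices
to treat `x^α₀ y^β₀ - x^α₁ y^β₁` of equal `C`-degree with `u·β₀ ≤ u·β₁`. Comparing degrees gives
`k₁ (Aα₀ - Aα₁) = k₂ (u·β₁ - u·β₀) b`, so `gcd b = 1` and `gcd(k₁, k₂) = 1` force
`u·β₁ = u·β₀ + s k₁` and `Aα₀ = Aα₁ + s k₂ b = A(α₁ + s k₂ d)` for some `s`. Then
`x^α₀ y^β₀ - x^α₁ y^β₁ = (x^α₀ - x^(α₁ + s k₂ d)) y^β₀ + x^α₁ y^β₀ (x^(s k₂ d) - y^(s v))`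
`+ x^α₁ (y^(β₀ + s v) - y^β₁)`, and the three summands lie in `I_A`, `⟨ρ⟩` and `I_B`.
-/

theorem Finsupp.linearCombination_sumElim {R M σ τ : Type*} [Semiring R] [AddCommMonoid M]
    [Module R M] (v : σ → M) (w : τ → M) (α : σ →₀ R) (β : τ →₀ R) :
    linearCombination R (Sum.elim v w) (α.sumElim β) =
      linearCombination R v α + linearCombination R w β := by
  rw [sumElim_eq_add, map_add, linearCombination_mapDomain, linearCombination_mapDomain,
    Sum.elim_comp_inl, Sum.elim_comp_inr]

theorem Finsupp.linearCombination_const_smul {R M σ : Type*} [CommSemiring R] [AddCommMonoid M]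
    [Module R M] (c : R) (v : σ → M) (α : σ →₀ R) :
    linearCombination R (fun j => c • v j) α = c • linearCombination R v α := by
  simp only [linearCombination_apply, smul_sum]
  exact sum_congr fun j _ => smul_comm _ _ _

theorem Finsupp.linearCombination_smul_const {R M σ : Type*} [Semiring R] [AddCommMonoid M]
    [Module R M] (u : σ → R) (b : M) (α : σ →₀ R) :
    linearCombination R (fun j => u j • b) α = linearCombination R u α • b := by
  simp only [linearCombination_apply, Finsupp.sum, Finset.sum_smul, smul_smul, smul_eq_mul]

theorem MvPolynomial.prod_X_pow_eq_monomial_equivFunOnFinite_symm {R ι : Type*} [CommSemiring R] [Fintype ι]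
    (c : ι → ℕ) :
    ∏ i, (X i : MvPolynomial ι R) ^ c i = monomial (Finsupp.equivFunOnFinite.symm c) 1 := by
  rw [monomial_eq, C_1, one_mul, Finsupp.prod_fintype _ _ fun _ => pow_zero _]
  rfl

theorem MvPolynomial.mapDomain_monomial {R σ τ : Type*} [CommSemiring R] (f : (σ →₀ ℕ) → (τ →₀ ℕ))
    (s : σ →₀ ℕ) (a : R) :
    AddMonoidAlgebra.mapDomain f (monomial s a : MvPolynomial σ R) = monomial (f s) a :=
  AddMonoidAlgebra.mapDomain_single

section Toric

variable {k : Type} [Field k] {σ : Type} {n : ℕ}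

theorem aeval_toric_monomial (A : σ → Fin n → ℕ) (e : σ →₀ ℕ) (c : k) :
    aeval (fun j => ∏ i, (X i : MvPolynomial (Fin n) k) ^ A j i) (monomial e c) =
      monomial (Finsupp.equivFunOnFinite.symm (Finsupp.linearCombination ℕ A e)) c := by
  simp_rw [prod_X_pow_eq_monomial_equivFunOnFinite_symm, aeval_monomial, monomial_pow, one_pow,
    algebraMap_eq, Finsupp.prod, ← monomial_sum_one, C_mul_monomial, mul_one]
  congr 2
  ext i
  simp [Finsupp.linearCombination_apply, Finsupp.sum, Finsupp.finsetSum_apply]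

theorem monomial_sub_monomial_mem_toricIdeal (A : σ → Fin n → ℕ) {e e' : σ →₀ ℕ}
    (h : Finsupp.linearCombination ℕ A e = Finsupp.linearCombination ℕ A e') (c : k) :
    monomial e c - monomial e' c ∈ toricIdeal k A := by
  rw [toricIdeal, RingHom.mem_ker, map_sub, aeval_toric_monomial, aeval_toric_monomial, h,
    sub_self]

theorem toricIdeal_le_of_forall_monomial_sub_monomial_mem (A : σ → Fin n → ℕ)
    {I : Ideal (MvPolynomial σ k)}
    (hI : ∀ e e' : σ →₀ ℕ, Finsupp.linearCombination ℕ A e = Finsupp.linearCombination ℕ A e' →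
      monomial e 1 - monomial e' 1 ∈ I) :
    toricIdeal k A ≤ I := by
  set φ := aeval (R := k) fun j => ∏ i, (X i : MvPolynomial (Fin n) k) ^ A j i
  set wt : (σ →₀ ℕ) → (Fin n →₀ ℕ) := fun e =>
    Finsupp.equivFunOnFinite.symm (Finsupp.linearCombination ℕ A e)
  have hwt : ∀ e, wt (Function.invFun wt (wt e)) = wt e := fun e => Function.invFun_eq ⟨e, rfl⟩
  -- `Function.invFun wt` picks one exponent of each weight; pushing `f` forward along it
  -- changes `f` only modulo `I` and factors through `φ`.
  have hmod : ∀ f : MvPolynomial σ k,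
      f - AddMonoidAlgebra.mapDomain (Function.invFun wt) (φ f) ∈ I := by
    intro f
    induction f using MvPolynomial.induction_on' with
    | monomial e c =>
      rw [aeval_toric_monomial, mapDomain_monomial]
      convert I.mul_mem_left (C c)
        (hI _ _ (Finsupp.equivFunOnFinite.symm.injective (hwt e).symm)) using 1
      rw [mul_sub, C_mul_monomial, C_mul_monomial, mul_one]
    | add f g hf hg =>
      rw [map_add, AddMonoidAlgebra.mapDomain_add, add_sub_add_comm]
      exact add_mem hf hg
  intro f hf
  simpa [show φ f = 0 from hf] using hmod f

theorem map_rename_toricIdeal_le {τ : Type} (g : σ → τ) (A : σ → Fin n → ℕ)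
    {C : τ → Fin n → ℕ} (c : ℕ) (hC : ∀ j, C (g j) = c • A j) :
    Ideal.map (rename g) (toricIdeal k A) ≤ toricIdeal k C := by
  rw [Ideal.map_le_iff_le_comap]
  refine toricIdeal_le_of_forall_monomial_sub_monomial_mem A fun e e' h => ?_
  rw [Ideal.mem_comap, map_sub, rename_monomial, rename_monomial]
  refine monomial_sub_monomial_mem_toricIdeal C ?_ 1
  simp only [Finsupp.linearCombination_mapDomain, Function.comp_def, hC,
    Finsupp.linearCombination_const_smul, h]

end Toric

theorem Nat.dvd_of_forall_dvd_mul_of_gcd_eq_one {ι : Type*} {s : Finset ι} {b : ι → ℕ}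
    (hb : s.gcd b = 1) {c m : ℕ} (h : ∀ i ∈ s, c ∣ m * b i) : c ∣ m := by
  simpa [Finset.gcd_mul_left, hb] using Finset.dvd_gcd h

theorem exists_eq_add_of_smul_add_smul_eq {ι : Type*} [Fintype ι] {a₀ a₁ b : ι → ℕ}
    (hb : Finset.univ.gcd b = 1) {k₁ k₂ U₀ U₁ : ℕ} (hk₁ : 0 < k₁) (hk : k₁.Coprime k₂)
    (hU : U₀ ≤ U₁) (h : k₁ • a₀ + (k₂ * U₀) • b = k₁ • a₁ + (k₂ * U₁) • b) :
    ∃ s, U₁ = U₀ + s * k₁ ∧ a₀ = a₁ + (s * k₂) • b := by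
  obtain ⟨m, rfl⟩ := Nat.exists_eq_add_of_le hU
  have hcomp : ∀ i, k₁ * a₀ i = k₁ * a₁ i + k₂ * m * b i := fun i => by
    have := congrFun h i
    simp only [Pi.add_apply, Pi.smul_apply, smul_eq_mul] at this
    linarith
  obtain ⟨s, rfl⟩ : k₁ ∣ m := by
    refine hk.dvd_of_dvd_mul_left (Nat.dvd_of_forall_dvd_mul_of_gcd_eq_one hb fun i _ => ?_)
    exact (Nat.dvd_add_right (dvd_mul_right _ _)).mp (hcomp i ▸ dvd_mul_right _ _)
  refine ⟨s, by ring, funext fun i => Nat.eq_of_mul_eq_mul_left hk₁ ?_⟩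
  simp only [Pi.add_apply, Pi.smul_apply, smul_eq_mul, hcomp]
  ring

section Gluing

variable {k : Type} [Field k] {σ₁ σ₂ : Type} {n : ℕ}

theorem monomial_sumElim (α : σ₁ →₀ ℕ) (β : σ₂ →₀ ℕ) :
    (monomial (α.sumElim β) 1 : MvPolynomial (σ₁ ⊕ σ₂) k) =
      rename Sum.inl (monomial α 1) * rename Sum.inr (monomial β 1) := by
  rw [rename_monomial, rename_monomial, monomial_mul, mul_one, Finsupp.sumElim_eq_add]

theorem linearCombination_glue (A : σ₁ → Fin n → ℕ) (u : σ₂ → ℕ) (b : Fin n → ℕ) (k₁ k₂ : ℕ)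
    (α : σ₁ →₀ ℕ) (β : σ₂ →₀ ℕ) :
    Finsupp.linearCombination ℕ (Sum.elim (fun j => k₁ • A j) fun j => k₂ • u j • b)
        (α.sumElim β) =
      k₁ • Finsupp.linearCombination ℕ A α + (k₂ * Finsupp.linearCombination ℕ u β) • b := by
  rw [Finsupp.linearCombination_sumElim, Finsupp.linearCombination_const_smul,
    Finsupp.linearCombination_const_smul, Finsupp.linearCombination_smul_const, smul_smul]

theorem monomial_sumElim_sub_mem_of_weight_eq (A : σ₁ → Fin n → ℕ) {b : Fin n → ℕ}
    (hb : Finset.univ.gcd b = 1) {d : σ₁ →₀ ℕ} (hd : Finsupp.linearCombination ℕ A d = b)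
    (u : σ₂ → ℕ) {k₁ k₂ : ℕ} (hk₁ : 0 < k₁) (hk : k₁.Coprime k₂) {v : σ₂ →₀ ℕ}
    (hv : Finsupp.linearCombination ℕ u v = k₁) {J : Ideal (MvPolynomial (σ₁ ⊕ σ₂) k)}
    (hA : Ideal.map (rename Sum.inl) (toricIdeal k A) ≤ J)
    (hB : Ideal.map (rename Sum.inr) (toricIdeal k fun j => u j • b) ≤ J)
    (hρ : rename Sum.inr (monomial v 1) - rename Sum.inl (monomial (k₂ • d) 1) ∈ J)
    {α₀ α₁ : σ₁ →₀ ℕ} {β₀ β₁ : σ₂ →₀ ℕ}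
    (hw : k₁ • Finsupp.linearCombination ℕ A α₀ + (k₂ * Finsupp.linearCombination ℕ u β₀) • b =
      k₁ • Finsupp.linearCombination ℕ A α₁ + (k₂ * Finsupp.linearCombination ℕ u β₁) • b)
    (hle : Finsupp.linearCombination ℕ u β₀ ≤ Finsupp.linearCombination ℕ u β₁) :
    monomial (α₀.sumElim β₀) 1 - monomial (α₁.sumElim β₁) 1 ∈ J := by
  obtain ⟨s, hU, ha⟩ := exists_eq_add_of_smul_add_smul_eq hb hk₁ hk hle hw
  set x : (σ₁ →₀ ℕ) → MvPolynomial (σ₁ ⊕ σ₂) k := fun α => rename Sum.inl (monomial α 1)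
  set y : (σ₂ →₀ ℕ) → MvPolynomial (σ₁ ⊕ σ₂) k := fun β => rename Sum.inr (monomial β 1)
  have hx : ∀ α α', x (α + α') = x α * x α' := fun _ _ => by
    simp only [x, ← map_mul, monomial_mul, mul_one]
  have hy : ∀ β β', y (β + β') = y β * y β' := fun _ _ => by
    simp only [y, ← map_mul, monomial_mul, mul_one]
  have h₁ : x α₀ - x (α₁ + s • k₂ • d) ∈ J := by
    refine hA ?_
    rw [← map_sub]
    refine Ideal.mem_map_of_mem _ (monomial_sub_monomial_mem_toricIdeal A ?_ 1)
    rw [map_add, map_smul, map_smul, hd, ha, smul_smul]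
  have h₂ : x (s • k₂ • d) - y (s • v) ∈ J := by
    refine J.mem_of_dvd ?_ hρ
    rw [← neg_sub, neg_dvd]
    simpa only [x, y, ← map_pow, monomial_pow, one_pow] using
      sub_dvd_pow_sub_pow (x (k₂ • d)) (y v) s
  have h₃ : y (β₀ + s • v) - y β₁ ∈ J := by
    refine hB ?_
    rw [← map_sub]
    refine Ideal.mem_map_of_mem _ (monomial_sub_monomial_mem_toricIdeal _ ?_ 1)
    rw [Finsupp.linearCombination_smul_const, Finsupp.linearCombination_smul_const, map_add,
      map_smul, hv, hU, smul_eq_mul]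
  have hsplit : monomial (α₀.sumElim β₀) 1 - monomial (α₁.sumElim β₁) 1 =
      (x α₀ - x (α₁ + s • k₂ • d)) * y β₀ + x α₁ * y β₀ * (x (s • k₂ • d) - y (s • v)) +
        x α₁ * (y (β₀ + s • v) - y β₁) := by
    rw [monomial_sumElim, monomial_sumElim, hx, hy]
    ring
  rw [hsplit]
  exact add_mem (add_mem (J.mul_mem_right _ h₁) (J.mul_mem_left _ h₂)) (J.mul_mem_left _ h₃)

theorem toricIdeal_sumElim_eq_sup (A : σ₁ → Fin n → ℕ) {b : Fin n → ℕ}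
    (hb : Finset.univ.gcd b = 1) {d : σ₁ →₀ ℕ} (hd : Finsupp.linearCombination ℕ A d = b)
    (u : σ₂ → ℕ) {k₁ k₂ : ℕ} (hk₁ : 0 < k₁) (hk : k₁.Coprime k₂) {v : σ₂ →₀ ℕ}
    (hv : Finsupp.linearCombination ℕ u v = k₁) :
    toricIdeal k (Sum.elim (fun j => k₁ • A j) fun j => k₂ • u j • b) =
      Ideal.map (rename Sum.inl) (toricIdeal k A) ⊔
        Ideal.map (rename Sum.inr) (toricIdeal k fun j => u j • b) ⊔
        Ideal.span {rename Sum.inr (monomial v 1) - rename Sum.inl (monomial (k₂ • d) 1)} := by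
  refine le_antisymm ?_ (sup_le (sup_le ?_ ?_) ?_)
  · refine toricIdeal_le_of_forall_monomial_sub_monomial_mem _ fun e e' he => ?_
    obtain ⟨α₀, β₀, rfl⟩ : ∃ α β, e = Finsupp.sumElim α β :=
      ⟨_, _, (Finsupp.comapDomain_sumElim_comapDomain e).symm⟩
    obtain ⟨α₁, β₁, rfl⟩ : ∃ α β, e' = Finsupp.sumElim α β :=
      ⟨_, _, (Finsupp.comapDomain_sumElim_comapDomain e').symm⟩
    rw [linearCombination_glue, linearCombination_glue] at he
    wlog hle : Finsupp.linearCombination ℕ u β₀ ≤ Finsupp.linearCombination ℕ u β₁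
      generalizing α₀ β₀ α₁ β₁
    · simpa only [neg_sub] using neg_mem (this α₁ β₁ α₀ β₀ he.symm (le_of_not_ge hle))
    exact monomial_sumElim_sub_mem_of_weight_eq A hb hd u hk₁ hk hv
      (le_sup_left.trans le_sup_left) (le_sup_right.trans le_sup_left)
      (Ideal.mem_sup_right (Ideal.mem_span_singleton_self _)) he hle
  · exact map_rename_toricIdeal_le Sum.inl A k₁ fun _ => rfl
  · exact map_rename_toricIdeal_le Sum.inr _ k₂ fun _ => rfl
  · rw [Ideal.span_le, Set.singleton_subset_iff, rename_monomial, rename_monomial]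
    refine monomial_sub_monomial_mem_toricIdeal _ ?_ 1
    rw [Finsupp.linearCombination_mapDomain, Finsupp.linearCombination_mapDomain, Sum.elim_comp_inr,
      Sum.elim_comp_inl, Finsupp.linearCombination_const_smul, Finsupp.linearCombination_smul_const,
      Finsupp.linearCombination_const_smul, map_smul, hv, hd, smul_smul, smul_smul, mul_comm]

end Gluing

theorem glue_line_general (k : Type) [Field k] {n p q : ℕ}
    (A : Fin p → Fin n → ℕ) (b : Fin n → ℕ)
    (hgcdb : Finset.univ.gcd b = 1)
    (d : Fin p → ℕ) (hbA : ∀ i, b i = ∑ j, d j * A j i)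
    (u : Fin q → ℕ)
    (k1 k2 : ℕ) (hk1 : 0 < k1) (hcop : Nat.Coprime k1 k2)
    (v : Fin q → ℕ) (hk1u : k1 = ∑ j, v j * u j) :
    toricIdeal k (Sum.elim (fun j i => k1 * A j i) (fun j i => k2 * (u j * b i))) =
      Ideal.map (rename Sum.inl) (toricIdeal k A) ⊔
      Ideal.map (rename Sum.inr) (toricIdeal k (fun j i => u j * b i)) ⊔
      Ideal.span {(∏ j, X (Sum.inr j) ^ v j : MvPolynomial (Fin p ⊕ Fin q) k) -
        ∏ j, X (Sum.inl j) ^ (d j * k2)} := by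
  have hd : Finsupp.linearCombination ℕ A (Finsupp.equivFunOnFinite.symm d) = b := by
    refine (Finsupp.linearCombination_eq_fintype_linearCombination_apply ℕ A d).trans ?_
    ext i
    simp [Fintype.linearCombination_apply, hbA]
  have hv : Finsupp.linearCombination ℕ u (Finsupp.equivFunOnFinite.symm v) = k1 := by
    refine (Finsupp.linearCombination_eq_fintype_linearCombination_apply ℕ u v).trans ?_
    simp [Fintype.linearCombination_apply, hk1u]
  have hρ : (∏ j, X (Sum.inr j) ^ v j : MvPolynomial (Fin p ⊕ Fin q) k) -
        ∏ j, X (Sum.inl j) ^ (d j * k2) =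
      rename Sum.inr (monomial (Finsupp.equivFunOnFinite.symm v) 1) -
        rename Sum.inl (monomial (k2 • Finsupp.equivFunOnFinite.symm d) 1) := by
    have hdk : k2 • Finsupp.equivFunOnFinite.symm d = Finsupp.equivFunOnFinite.symm (k2 • d) := by
      ext; simp
    rw [hdk, ← prod_X_pow_eq_monomial_equivFunOnFinite_symm,
      ← prod_X_pow_eq_monomial_equivFunOnFinite_symm, map_prod, map_prod]
    simp only [map_pow, rename_X, Pi.smul_apply, smul_eq_mul, mul_comm]
  rw [hρ]
  exact toricIdeal_sumElim_eq_sup A hgcdb hd u hk1 hcop hv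

/-- Gluing along a line: if `b = Σ d_j a_j ∈ ⟨A⟩` with `gcd(b₁,…,b_n) = 1`,
`B = (u₁b,…,u_qb)` with `q ≥ 2`, and `k₁ = Σ v_j u_j ∈ ⟨u₁,…,u_q⟩` with
`gcd(k₁,k₂) = 1`, then for `C = k₁A ∪ k₂B` one has `I_C = I_A + I_B + ⟨ρ⟩` with
`ρ = ∏ y_j^{v_j} − ∏ x_j^{d_j k₂}`; in particular `⟨C⟩` is a gluing of `⟨A⟩` and `⟨B⟩`. -/
theorem glue_line (k : Type) [Field k] {n p q : ℕ} (hq : 2 ≤ q)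
    (A : Fin p → Fin n → ℕ) (b : Fin n → ℕ) (hb : b ≠ 0)
    (hgcdb : Finset.univ.gcd b = 1)
    (d : Fin p → ℕ) (hbA : ∀ i, b i = ∑ j, d j * A j i)
    (u : Fin q → ℕ) (hu : ∀ j, 0 < u j)
    (k1 k2 : ℕ) (hk1 : 0 < k1) (hk2 : 0 < k2) (hcop : Nat.Coprime k1 k2)
    (v : Fin q → ℕ) (hk1u : k1 = ∑ j, v j * u j) :
    toricIdeal k (Sum.elim (fun j i => k1 * A j i) (fun j i => k2 * (u j * b i))) =
      Ideal.map (rename Sum.inl) (toricIdeal k A) ⊔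
      Ideal.map (rename Sum.inr) (toricIdeal k (fun j i => u j * b i)) ⊔
      Ideal.span {(∏ j, X (Sum.inr j) ^ v j : MvPolynomial (Fin p ⊕ Fin q) k) -
        ∏ j, X (Sum.inl j) ^ (d j * k2)} :=
  glue_line_general k A b hgcdb d hbA u k1 k2 hk1 hcop v hk1u
end
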